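/- Let n ≥ 5, let Λ₀ = {x ∈ ℤⁿ : Σxᵢ = 0}, and let the alternating group A_n act on Λ₀ by permuting coordinates. If φ is a group homomorphism from Λ₀ ⋊ A_n to a group L that is trivial on A_n, then φ is trivial on Λ₀ as well. -/

import Mathlib

/-!
As `φ` kills `Aₙ`, its restriction to `Λ₀` is `Aₙ`-invariant. For `n ≥ 4` the alternating group
is 2-transitive, so the roots `e i - e j` (`i ≠ j`) form one orbit and `φ` takes a common value
on them. Since `e a - e c = (e a - e b) + (e b - e c)`, that value is idempotent, hence trivial,
and the roots generate `Λ₀`.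
-/

/-- The subgroup `Λ₀` of `ℤⁿ` consisting of tuples whose coordinates sum to zero. -/
def sumZero (n : ℕ) : AddSubgroup (Fin n → ℤ) where
  carrier := {x | ∑ i, x i = 0}
  add_mem' := by
    intro a b ha hb
    simp only [Set.mem_setOf_eq, Pi.add_apply, Finset.sum_add_distrib] at *
    rw [ha, hb, add_zero]
  zero_mem' := by simp
  neg_mem' := by
    intro a ha
    simp only [Set.mem_setOf_eq, Pi.neg_apply, Finset.sum_neg_distrib] at *
    rw [ha, neg_zero]

/-- The multiplicative group structure on `AddAut` used by older Mathlib (composition). -/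
instance addAutMulGroupOld (A : Type*) [Add A] : Group (AddAut A) where
  mul g h := AddEquiv.trans h g
  one := AddEquiv.refl _
  inv := AddEquiv.symm
  mul_assoc _ _ _ := rfl
  one_mul _ := rfl
  mul_one _ := rfl
  inv_mul_cancel := AddEquiv.self_trans_symm

/-- The action of permutations on `Λ₀` by permuting coordinates. -/
def permAddAut (n : ℕ) : Equiv.Perm (Fin n) →* AddAut (sumZero n) where
  toFun σ :=
    { toFun := fun x => ⟨x.1 ∘ σ.symm, by
        have := x.2
        change ∑ i, (x.1 ∘ σ.symm) i = 0
        simpa [Function.comp] using (Equiv.sum_comp σ.symm x.1).trans this⟩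
      invFun := fun x => ⟨x.1 ∘ σ, by
        have := x.2
        change ∑ i, (x.1 ∘ σ) i = 0
        simpa [Function.comp] using (Equiv.sum_comp σ x.1).trans this⟩
      left_inv := fun x => by
        ext i
        simp
      right_inv := fun x => by
        ext i
        simp
      map_add' := fun x y => rfl }
  map_one' := by
    ext x i
    rfl
  map_mul' σ τ := by
    ext x i
    rfl

/-- The action of the alternating group on `Multiplicative Λ₀` by permuting coordinates. -/
def altAct (n : ℕ) : alternatingGroup (Fin n) →* MulAut (Multiplicative (sumZero n)) where
  toFun σ :=
    { toFun := fun x => Multiplicative.ofAdd (permAddAut n σ.1 x.toAdd)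
      invFun := fun x => Multiplicative.ofAdd (permAddAut n σ.1⁻¹ x.toAdd)
      left_inv := fun x => by
        apply Multiplicative.toAdd.injective; ext i; simp [permAddAut, Equiv.Perm.inv_def]
      right_inv := fun x => by
        apply Multiplicative.toAdd.injective; ext i; simp [permAddAut, Equiv.Perm.inv_def]
      map_mul' := fun x y => by
        show Multiplicative.ofAdd (permAddAut n σ.1 (x * y).toAdd) = _
        rw [show (x * y).toAdd = x.toAdd + y.toAdd from rfl, map_add, ofAdd_add] }
  map_one' := by
    refine MulEquiv.ext fun x => ?_
    show Multiplicative.ofAdd (permAddAut n (1 : Equiv.Perm (Fin n)) x.toAdd) = x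
    rfl
  map_mul' σ τ := by
    refine MulEquiv.ext fun x => ?_
    show Multiplicative.ofAdd (permAddAut n (σ.1 * τ.1) x.toAdd) = _
    rw [map_mul]
    rfl

/-- The semidirect product `Λ₀ ⋊ Aₙ`. -/
abbrev LamSemidirect (n : ℕ) :=
  Multiplicative (sumZero n) ⋊[altAct n] alternatingGroup (Fin n)

theorem SemidirectProduct.map_inl_aut_of_map_inr_eq_one {N G H : Type*} [Group N] [Group G]
    [Group H] {φ : G →* MulAut N} (f : N ⋊[φ] G →* H) (hf : ∀ g, f (inr g) = 1) (g : G) (x : N) :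
    f (inl (φ g x)) = f (inl x) := by
  simp [inl_aut, hf]

theorem alternatingGroup.exists_apply_eq_and_apply_eq {α : Type*} [Fintype α] [DecidableEq α]
    (hα : 4 ≤ Nat.card α) {a b c d : α} (hab : a ≠ b) (hcd : c ≠ d) :
    ∃ σ : alternatingGroup α, (σ : Equiv.Perm α) a = c ∧ (σ : Equiv.Perm α) b = d := by
  have := alternatingGroup.isMultiplyPretransitive α
  have : MulAction.IsMultiplyPretransitive (alternatingGroup α) α 2 :=
    MulAction.isMultiplyPretransitive_of_le (n := Nat.card α - 2) (by omega) (by omega)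
  exact MulAction.is_two_pretransitive_iff.mp this hab hcd

namespace sumZero

variable {n : ℕ}

def root (i j : Fin n) : sumZero n :=
  ⟨Pi.single i 1 - Pi.single j 1, by
    show ∑ m, (Pi.single i 1 - Pi.single j 1 : Fin n → ℤ) m = 0
    simp [Finset.sum_sub_distrib]⟩

@[simp]
theorem coe_root (i j : Fin n) : (root i j : Fin n → ℤ) = Pi.single i 1 - Pi.single j 1 := rfl

theorem root_self (i : Fin n) : root i i = 0 := by
  ext; simp

theorem root_add_root (i j k : Fin n) : root i j + root j k = root i k := by
  ext; simp

theorem permAddAut_root (σ : Equiv.Perm (Fin n)) (i j : Fin n) :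
    permAddAut n σ (root i j) = root (σ i) (σ j) := by
  ext m
  simp [permAddAut, Pi.single_apply, Equiv.symm_apply_eq]

theorem eq_sum_zsmul_root (v : sumZero n) (k : Fin n) : v = ∑ i, v.1 i • root i k := by
  have hv : ∑ i, v.1 i = 0 := v.2
  ext m
  simp [Finset.sum_apply, Pi.single_apply, mul_sub, Finset.sum_sub_distrib, hv]

section AlternatingInvariant

variable {A : Type*} [AddGroup A] (f : sumZero n →+ A)

theorem eq_zero_of_map_root_eq_zero (k : Fin n) (h : ∀ i, f (root i k) = 0) : f = 0 := by
  ext v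
  rw [eq_sum_zsmul_root v k]
  exact f.ker.sum_mem fun i _ ↦ f.ker.zsmul_mem (h i) _

theorem map_root_eq_map_root (hn : 4 ≤ n)
    (hf : ∀ σ : alternatingGroup (Fin n), ∀ v, f (permAddAut n σ v) = f v)
    {i j k l : Fin n} (hij : i ≠ j) (hkl : k ≠ l) : f (root i j) = f (root k l) := by
  obtain ⟨σ, hσi, hσj⟩ :=
    alternatingGroup.exists_apply_eq_and_apply_eq (by simpa using hn) hij hkl
  rw [← hσi, ← hσj, ← permAddAut_root, hf]

theorem map_root_eq_zero (hn : 4 ≤ n)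
    (hf : ∀ σ : alternatingGroup (Fin n), ∀ v, f (permAddAut n σ v) = f v) (i j : Fin n) :
    f (root i j) = 0 := by
  obtain rfl | hij := eq_or_ne i j
  · rw [root_self, map_zero]
  let a : Fin n := ⟨0, by omega⟩
  let b : Fin n := ⟨1, by omega⟩
  let c : Fin n := ⟨2, by omega⟩
  have hab : a ≠ b := by simp [a, b, Fin.ext_iff]
  have hbc : b ≠ c := by simp [b, c, Fin.ext_iff]
  have hac : a ≠ c := by simp [a, c, Fin.ext_iff]
  have hidem : f (root a c) + f (root a c) = f (root a c) := by
    nth_rw 3 [← root_add_root a b c]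
    rw [map_add, map_root_eq_map_root f hn hf hab hac, map_root_eq_map_root f hn hf hbc hac]
  rw [map_root_eq_map_root f hn hf hij hac]
  exact add_eq_left.mp hidem

end AlternatingInvariant

end sumZero

/-- For `n ≥ 5`, if a homomorphism from `Λ₀ ⋊ Aₙ` to a group `L` is trivial on the
alternating group `Aₙ`, then it is trivial on `Λ₀` as well. -/
theorem hom_trivial_on_alternating_trivial_on_lattice (n : ℕ) (hn : 5 ≤ n)
    (L : Type*) [Group L] (φ : LamSemidirect n →* L)
    (hA : ∀ σ : alternatingGroup (Fin n), φ (SemidirectProduct.inr σ) = 1) :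
    ∀ v : Multiplicative (sumZero n), φ (SemidirectProduct.inl v) = 1 := by
  let f := AddMonoidHom.toMultiplicativeLeft.symm (φ.comp SemidirectProduct.inl)
  have hf : ∀ σ : alternatingGroup (Fin n), ∀ v, f (permAddAut n σ v) = f v := fun σ v ↦
    congrArg Additive.ofMul
      (SemidirectProduct.map_inl_aut_of_map_inr_eq_one φ hA σ (Multiplicative.ofAdd v))
  have hf0 : f = 0 := sumZero.eq_zero_of_map_root_eq_zero f ⟨0, by omega⟩
    fun i ↦ sumZero.map_root_eq_zero f (by omega) hf i _
  exact fun v ↦ congrArg Additive.toMul (DFunLike.congr_fun hf0 v.toAdd)
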